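/- (Stability core of Theorem 1.) Let n_ψ, n_e, n_z, n_f ∈ ℕ, let P be an n_ψ×n_ψ real symmetric positive definite matrix, let γ > 0, σ > 0 and ε > 0. Define R₁ = diag(P, I_{n_e}, γ²·I_{n_f}) and R₂ = diag(P, σ·I_{n_e}, I_{n_z}) as block-diagonal matrices. Let (H_k)_{k∈ℕ} be a sequence of (n_ψ+n_e+n_z)×(n_ψ+n_e+n_f) real matrices such that R₁ − ε·I − H_kᵀ R₂ H_k is positive semidefinite for every k. Let ψ : ℕ → ℝ^{n_ψ}, e : ℕ → ℝ^{n_e}, η : ℕ → ℝ^{n_e}, z : ℕ → ℝ^{n_z} be sequences such that for every k, (ψ(k+1), η(k), z(k)) = H_k · (ψ(k), e(k), 0) (zero exogenous input) and ‖e(k)‖₂² ≤ σ·‖η(k)‖₂². Then ψ(k) → 0 as k → ∞. -/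

import Mathlib

/-!
Along trajectories, the quadratic form of the certificate evaluated at `(ψ k, e k, 0)` gives
`V (k+1) + σ ‖η k‖² + ‖z k‖² + ε (‖ψ k‖² + ‖e k‖²) ≤ V k + ‖e k‖²` for `V = ψᵀ P ψ`; the trigger
condition `‖e k‖² ≤ σ ‖η k‖²` absorbs the measurement error, leaving `V (k+1) + ε ‖ψ k‖² ≤ V k`.
Telescoping makes `∑ ‖ψ k‖²` finite, so `ψ k → 0`.
-/

open Matrix Filter Topology

theorem dotProduct_mulVec_le_of_posSemidef_sub {n : Type*} [Fintype n] {M N : Matrix n n ℝ}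
    (h : (M - N).PosSemidef) (x : n → ℝ) : x ⬝ᵥ (N *ᵥ x) ≤ x ⬝ᵥ (M *ᵥ x) := by
  have := h.dotProduct_mulVec_nonneg x
  rw [star_trivial, sub_mulVec, dotProduct_sub] at this
  linarith

theorem dotProduct_mulVec_transpose_mul_mul {m n : Type*} [Fintype m] [Fintype n]
    (H : Matrix m n ℝ) (R : Matrix m m ℝ) (x : n → ℝ) :
    x ⬝ᵥ ((Hᵀ * R * H) *ᵥ x) = (H *ᵥ x) ⬝ᵥ (R *ᵥ (H *ᵥ x)) := by
  rw [← mulVec_mulVec, ← mulVec_mulVec, dotProduct_mulVec, vecMul_transpose]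

theorem sumElim_dotProduct_fromBlocks_diag_mulVec {m n : Type*} [Fintype m] [Fintype n]
    (A : Matrix m m ℝ) (D : Matrix n n ℝ) (u : m → ℝ) (v : n → ℝ) :
    Sum.elim u v ⬝ᵥ (fromBlocks A 0 0 D *ᵥ Sum.elim u v) = u ⬝ᵥ (A *ᵥ u) + v ⬝ᵥ (D *ᵥ v) := by
  simp [fromBlocks_mulVec, sumElim_dotProduct_sumElim]

theorem dotProduct_self_nonneg {n : Type*} [Fintype n] (v : n → ℝ) : 0 ≤ v ⬝ᵥ v := by
  simpa using dotProduct_star_self_nonneg v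

theorem lyapunov_decrease {nψ ne nz nf : ℕ} (P : Matrix (Fin nψ) (Fin nψ) ℝ) (γ σ ε : ℝ)
    (H : Matrix (Fin nψ ⊕ (Fin ne ⊕ Fin nz)) (Fin nψ ⊕ (Fin ne ⊕ Fin nf)) ℝ)
    (R₁ : Matrix (Fin nψ ⊕ (Fin ne ⊕ Fin nf)) (Fin nψ ⊕ (Fin ne ⊕ Fin nf)) ℝ)
    (R₂ : Matrix (Fin nψ ⊕ (Fin ne ⊕ Fin nz)) (Fin nψ ⊕ (Fin ne ⊕ Fin nz)) ℝ)
    (hR₁ : R₁ = fromBlocks P 0 0 (fromBlocks 1 0 0 (γ ^ 2 • (1 : Matrix (Fin nf) (Fin nf) ℝ))))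
    (hR₂ : R₂ = fromBlocks P 0 0 (fromBlocks (σ • (1 : Matrix (Fin ne) (Fin ne) ℝ)) 0 0 1))
    (hLMI : (R₁ - ε • 1 - Hᵀ * R₂ * H).PosSemidef)
    (ψ ψ' : Fin nψ → ℝ) (e η : Fin ne → ℝ) (z : Fin nz → ℝ)
    (hdyn : Sum.elim ψ' (Sum.elim η z) = H *ᵥ Sum.elim ψ (Sum.elim e (0 : Fin nf → ℝ)))
    (hET : e ⬝ᵥ e ≤ σ * (η ⬝ᵥ η)) (hε : 0 ≤ ε) :
    ψ' ⬝ᵥ (P *ᵥ ψ') + ε * (ψ ⬝ᵥ ψ) ≤ ψ ⬝ᵥ (P *ᵥ ψ) := by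
  have hcert := dotProduct_mulVec_le_of_posSemidef_sub hLMI (Sum.elim ψ (Sum.elim e 0))
  subst hR₁ hR₂
  rw [dotProduct_mulVec_transpose_mul_mul, ← hdyn] at hcert
  simp only [sub_mulVec, dotProduct_sub, sumElim_dotProduct_fromBlocks_diag_mulVec,
    sumElim_dotProduct_sumElim, one_mulVec, smul_mulVec, dotProduct_smul, smul_eq_mul,
    mulVec_zero, dotProduct_zero, add_zero] at hcert
  linarith [dotProduct_self_nonneg z, mul_nonneg hε (dotProduct_self_nonneg e)]

theorem summable_of_lyapunov_decrease {V a : ℕ → ℝ} {ε : ℝ} (hε : 0 < ε)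
    (hV : ∀ k, 0 ≤ V k) (ha : ∀ k, 0 ≤ a k) (hdec : ∀ k, V (k + 1) + ε * a k ≤ V k) :
    Summable a := by
  refine (summable_mul_left_iff hε.ne').1 <|
    summable_of_sum_range_le (c := V 0) (fun k => mul_nonneg hε.le (ha k)) fun n => ?_
  calc ∑ k ∈ Finset.range n, ε * a k ≤ ∑ k ∈ Finset.range n, (V k - V (k + 1)) :=
        Finset.sum_le_sum fun k _ => by linarith [hdec k]
    _ = V 0 - V n := Finset.sum_range_sub' V n
    _ ≤ V 0 := by linarith [hV n]

theorem tendsto_zero_of_dotProduct_self_tendsto_zero {α n : Type*} [Fintype n] {l : Filter α}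
    {x : α → n → ℝ} (h : Tendsto (fun k => x k ⬝ᵥ x k) l (𝓝 0)) : Tendsto x l (𝓝 0) := by
  rw [tendsto_pi_nhds]
  intro i
  have hsqrt : Tendsto (fun k => √(x k ⬝ᵥ x k)) l (𝓝 0) := by
    simpa [Function.comp_def] using (Real.continuous_sqrt.tendsto 0).comp h
  refine squeeze_zero_norm (fun k => Real.abs_le_sqrt ?_) hsqrt
  rw [sq]
  exact Finset.single_le_sum (f := fun j => x k j * x k j) (fun j _ => mul_self_nonneg _)
    (Finset.mem_univ i)

theorem stmt_9_general {nψ ne nz nf : ℕ}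
    (P : Matrix (Fin nψ) (Fin nψ) ℝ) (hP : P.PosDef)
    (γ σ ε : ℝ) (hε : 0 < ε)
    (H : ℕ → Matrix (Fin nψ ⊕ (Fin ne ⊕ Fin nz)) (Fin nψ ⊕ (Fin ne ⊕ Fin nf)) ℝ)
    (R₁ : Matrix (Fin nψ ⊕ (Fin ne ⊕ Fin nf)) (Fin nψ ⊕ (Fin ne ⊕ Fin nf)) ℝ)
    (R₂ : Matrix (Fin nψ ⊕ (Fin ne ⊕ Fin nz)) (Fin nψ ⊕ (Fin ne ⊕ Fin nz)) ℝ)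
    (hR₁ : R₁ = Matrix.fromBlocks P 0 0
      (Matrix.fromBlocks 1 0 0 (γ ^ 2 • (1 : Matrix (Fin nf) (Fin nf) ℝ))))
    (hR₂ : R₂ = Matrix.fromBlocks P 0 0
      (Matrix.fromBlocks (σ • (1 : Matrix (Fin ne) (Fin ne) ℝ)) 0 0 1))
    (hLMI : ∀ k, (R₁ - ε • (1 : Matrix (Fin nψ ⊕ (Fin ne ⊕ Fin nf))
      (Fin nψ ⊕ (Fin ne ⊕ Fin nf)) ℝ) - (H k)ᵀ * R₂ * H k).PosSemidef)
    (ψ : ℕ → Fin nψ → ℝ) (e : ℕ → Fin ne → ℝ)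
    (η : ℕ → Fin ne → ℝ) (z : ℕ → Fin nz → ℝ)
    (hdyn : ∀ k, Sum.elim (ψ (k + 1)) (Sum.elim (η k) (z k)) =
      H k *ᵥ Sum.elim (ψ k) (Sum.elim (e k) (0 : Fin nf → ℝ)))
    (hET : ∀ k, e k ⬝ᵥ e k ≤ σ * (η k ⬝ᵥ η k)) :
    Filter.Tendsto ψ Filter.atTop (nhds 0) := by
  have hdec : ∀ k, ψ (k + 1) ⬝ᵥ (P *ᵥ ψ (k + 1)) + ε * (ψ k ⬝ᵥ ψ k) ≤ ψ k ⬝ᵥ (P *ᵥ ψ k) :=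
    fun k => lyapunov_decrease P γ σ ε (H k) R₁ R₂ hR₁ hR₂ (hLMI k) _ _ _ _ _ (hdyn k) (hET k) hε.le
  have hsum : Summable fun k => ψ k ⬝ᵥ ψ k :=
    summable_of_lyapunov_decrease hε
      (fun k => by simpa using hP.posSemidef.dotProduct_mulVec_nonneg (ψ k))
      (fun k => dotProduct_self_nonneg (ψ k)) hdec
  exact tendsto_zero_of_dotProduct_self_tendsto_zero hsum.tendsto_atTop_zero

/-- Stability core of Theorem 1: a strict per-step quadratic dissipation certificate
`R₁ − ε I − H_kᵀ R₂ H_k ⪰ 0`, together with the event-trigger condition and zero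
exogenous input, yields `ψ k → 0`. -/
theorem stmt_9 {nψ ne nz nf : ℕ}
    (P : Matrix (Fin nψ) (Fin nψ) ℝ) (hP : P.PosDef)
    (γ σ ε : ℝ) (hγ : 0 < γ) (hσ : 0 < σ) (hε : 0 < ε)
    (H : ℕ → Matrix (Fin nψ ⊕ (Fin ne ⊕ Fin nz)) (Fin nψ ⊕ (Fin ne ⊕ Fin nf)) ℝ)
    (R₁ : Matrix (Fin nψ ⊕ (Fin ne ⊕ Fin nf)) (Fin nψ ⊕ (Fin ne ⊕ Fin nf)) ℝ)
    (R₂ : Matrix (Fin nψ ⊕ (Fin ne ⊕ Fin nz)) (Fin nψ ⊕ (Fin ne ⊕ Fin nz)) ℝ)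
    (hR₁ : R₁ = Matrix.fromBlocks P 0 0
      (Matrix.fromBlocks 1 0 0 (γ ^ 2 • (1 : Matrix (Fin nf) (Fin nf) ℝ))))
    (hR₂ : R₂ = Matrix.fromBlocks P 0 0
      (Matrix.fromBlocks (σ • (1 : Matrix (Fin ne) (Fin ne) ℝ)) 0 0 1))
    (hLMI : ∀ k, (R₁ - ε • (1 : Matrix (Fin nψ ⊕ (Fin ne ⊕ Fin nf))
      (Fin nψ ⊕ (Fin ne ⊕ Fin nf)) ℝ) - (H k)ᵀ * R₂ * H k).PosSemidef)
    (ψ : ℕ → Fin nψ → ℝ) (e : ℕ → Fin ne → ℝ)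
    (η : ℕ → Fin ne → ℝ) (z : ℕ → Fin nz → ℝ)
    (hdyn : ∀ k, Sum.elim (ψ (k + 1)) (Sum.elim (η k) (z k)) =
      H k *ᵥ Sum.elim (ψ k) (Sum.elim (e k) (0 : Fin nf → ℝ)))
    (hET : ∀ k, e k ⬝ᵥ e k ≤ σ * (η k ⬝ᵥ η k)) :
    Filter.Tendsto ψ Filter.atTop (nhds 0) :=
  stmt_9_general P hP γ σ ε hε H R₁ R₂ hR₁ hR₂ hLMI ψ e η z hdyn hET
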